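/- arXiv:2203.04137 — 5 statements merged into one kernel-verified Lean document; each statement's English description precedes it below -/
import Mathlib

section
/- Let X : ℝ² → ℝ² be a smooth ℤ²-periodic vector field that is non-vanishing on a dense subset of ℝ². Let (ω₁, ω₂) and (η₁, η₂) be closed 1-forms on the flat torus with ω₁X₁ + ω₂X₂ = 0 and η₁X₁ + η₂X₂ = 0 on ℝ². Then the period vectors of (ω₁, ω₂) and of (η₁, η₂) are linearly dependent vectors in ℝ². -/
open MeasureTheory

noncomputable section

/-- A function on `ℝ²` is `ℤ²`-periodic. -/
def ZPeriodic {E : Type*} (f : ℝ × ℝ → E) : Prop :=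
  ∀ (p : ℝ × ℝ) (k : ℤ × ℤ), f (p.1 + (k.1 : ℝ), p.2 + (k.2 : ℝ)) = f p

/-- A smooth 1-form on the flat torus: a pair of smooth `ℤ²`-periodic functions. -/
def SmoothOneForm (ω₁ ω₂ : ℝ × ℝ → ℝ) : Prop :=
  ContDiff ℝ (⊤ : ℕ∞) ω₁ ∧ ContDiff ℝ (⊤ : ℕ∞) ω₂ ∧ ZPeriodic ω₁ ∧ ZPeriodic ω₂

/-- A closed 1-form on the flat torus: `∂ω₂/∂x = ∂ω₁/∂y`. -/
def ClosedOneForm (ω₁ ω₂ : ℝ × ℝ → ℝ) : Prop :=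
  SmoothOneForm ω₁ ω₂ ∧
    ∀ p : ℝ × ℝ, fderiv ℝ ω₂ p (1, 0) = fderiv ℝ ω₁ p (0, 1)

/-- The period vector of a 1-form on the flat torus. -/
def PeriodVector (ω₁ ω₂ : ℝ × ℝ → ℝ) : ℝ × ℝ :=
  (∫ t in (0:ℝ)..1, ω₁ (t, 0), ∫ t in (0:ℝ)..1, ω₂ (0, t))

/-- A `P`-harmonic 1-form on the flat torus: closed with `∂(Pω₁)/∂x + ∂(Pω₂)/∂y = 0`. -/
def PHarmonicOneForm (P ω₁ ω₂ : ℝ × ℝ → ℝ) : Prop :=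
  ClosedOneForm ω₁ ω₂ ∧
    ∀ p : ℝ × ℝ,
      fderiv ℝ (fun q => P q * ω₁ q) p (1, 0) +
        fderiv ℝ (fun q => P q * ω₂ q) p (0, 1) = 0

/-- A smooth `ℤ²`-periodic vector field on the flat torus. -/
def SmoothVF (X : ℝ × ℝ → ℝ × ℝ) : Prop :=
  ContDiff ℝ (⊤ : ℕ∞) X ∧ ZPeriodic X

/-- A `P`-harmonic vector field on the flat torus:
`∂X₂/∂x = ∂X₁/∂y` and `∂(PX₁)/∂x + ∂(PX₂)/∂y = 0`. -/
def PHarmonicVF (P : ℝ × ℝ → ℝ) (X : ℝ × ℝ → ℝ × ℝ) : Prop :=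
  SmoothVF X ∧
    (∀ p : ℝ × ℝ, fderiv ℝ (fun q => (X q).2) p (1, 0) =
      fderiv ℝ (fun q => (X q).1) p (0, 1)) ∧
    ∀ p : ℝ × ℝ,
      fderiv ℝ (fun q => P q * (X q).1) p (1, 0) +
        fderiv ℝ (fun q => P q * (X q).2) p (0, 1) = 0

/-- The image in `ℝ²` of a lattice point under an integer matrix. -/
def IntMatApply (A : Matrix (Fin 2) (Fin 2) ℤ) (k : ℤ × ℤ) : ℝ × ℝ :=
  ((A 0 0 : ℝ) * k.1 + (A 0 1 : ℝ) * k.2,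
   (A 1 0 : ℝ) * k.1 + (A 1 1 : ℝ) * k.2)

/-- A torus diffeomorphism: a smooth diffeomorphism of `ℝ²` satisfying
`Φ(p + k) = Φ(p) + A k` for some `A ∈ GL(2,ℤ)`; it descends to `ℝ²/ℤ²`. -/
def TorusDiffeo (Φ : ℝ × ℝ → ℝ × ℝ) : Prop :=
  ContDiff ℝ (⊤ : ℕ∞) Φ ∧
  (∃ Ψ : ℝ × ℝ → ℝ × ℝ, ContDiff ℝ (⊤ : ℕ∞) Ψ ∧
     Function.LeftInverse Ψ Φ ∧ Function.RightInverse Ψ Φ) ∧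
  ∃ A : Matrix (Fin 2) (Fin 2) ℤ, (A.det = 1 ∨ A.det = -1) ∧
    ∀ (p : ℝ × ℝ) (k : ℤ × ℤ),
      Φ (p.1 + (k.1 : ℝ), p.2 + (k.2 : ℝ)) = Φ p + IntMatApply A k

/-- A vector field is linearisable if a torus diffeomorphism straightens it
to a constant vector field. -/
def Linearisable (X : ℝ × ℝ → ℝ × ℝ) : Prop :=
  ∃ Φ : ℝ × ℝ → ℝ × ℝ, TorusDiffeo Φ ∧
    ∃ a b : ℝ, ∀ p : ℝ × ℝ, fderiv ℝ Φ p (X p) = (a, b)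

/-- A Diophantine vector in `ℝ²`. -/
def DiophVec (u : ℝ × ℝ) : Prop :=
  ∃ γ : ℝ, 0 < γ ∧ ∃ τ : ℝ, 1 < τ ∧
    ∀ k : ℤ × ℤ, k ≠ 0 →
      γ * ‖((k.1 : ℝ), (k.2 : ℝ))‖ ^ (-τ) ≤ |u.1 * (k.1 : ℝ) + u.2 * (k.2 : ℝ)|

-- Green's identity for a closed form, via the divergence theorem
lemma closed_green {η₁ η₂ : ℝ × ℝ → ℝ} (hη : ClosedOneForm η₁ η₂) (x y : ℝ) :
    ((∫ t in (0:ℝ)..x, η₁ (t, y)) - ∫ t in (0:ℝ)..x, η₁ (t, 0)) =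
      (∫ s in (0:ℝ)..y, η₂ (x, s)) - ∫ s in (0:ℝ)..y, η₂ (0, s) := by
  obtain ⟨⟨h1, h2, hp1, hp2⟩, hcl⟩ := hη
  have hd1 : Differentiable ℝ η₁ := h1.differentiable (by simp)
  have hd2 : Differentiable ℝ η₂ := h2.differentiable (by simp)
  have key := integral2_divergence_prod_of_hasFDerivAt_off_countable
    η₂ (fun p => -η₁ p) (fun p => fderiv ℝ η₂ p) (fun p => -(fderiv ℝ η₁ p))
    0 0 x y ∅ Set.countable_empty
    (h2.continuous.continuousOn) ((h1.continuous.neg).continuousOn)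
    (fun p _ => (hd2 p).hasFDerivAt)
    (fun p _ => ((hd1 p).hasFDerivAt).neg)
    (by
      have : (fun p : ℝ × ℝ => (fderiv ℝ η₂ p) (1, 0) + (-(fderiv ℝ η₁ p)) (0, 1))
          = fun _ => (0 : ℝ) := by
        funext p
        have := hcl p
        simp only [ContinuousLinearMap.neg_apply]
        linarith
      rw [this]; exact integrableOn_zero)
  simp only [ContinuousLinearMap.neg_apply] at key
  have hz : ∀ u v : ℝ, (fderiv ℝ η₂ (u, v)) (1, 0) + -((fderiv ℝ η₁ (u, v)) (0, 1)) = 0 := by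
    intro u v; have := hcl (u, v); linarith
  simp only [hz, intervalIntegral.integral_zero, intervalIntegral.integral_neg] at key
  linarith

-- derivative of q ↦ ∫_{x₀}^{q.1} u (t, q.2) dt at p₀ is u p₀ • fst
lemma hasFDerivAt_parint (u : ℝ × ℝ → ℝ) (hu : Continuous u) (p₀ : ℝ × ℝ) :
    HasFDerivAt (fun q : ℝ × ℝ => ∫ t in p₀.1..q.1, u (t, q.2))
      ((u p₀) • ContinuousLinearMap.fst ℝ ℝ ℝ) p₀ := by
  rw [hasFDerivAt_iff_isLittleO_nhds_zero]
  rw [Asymptotics.isLittleO_iff]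
  intro ε hε
  obtain ⟨δ, hδ, hδ'⟩ := Metric.continuousAt_iff.mp (hu.continuousAt (x := p₀)) ε hε
  rw [Filter.eventually_iff_exists_mem]
  refine ⟨Metric.ball 0 δ, Metric.ball_mem_nhds 0 hδ, fun h hh => ?_⟩
  have hnorm : ‖h‖ < δ := by simpa using hh
  have h1 : |h.1| ≤ ‖h‖ := by
    rw [Prod.norm_def]; simp [le_max_left, Real.norm_eq_abs]
  have h2 : |h.2| ≤ ‖h‖ := by
    rw [Prod.norm_def]; simp [le_max_right, Real.norm_eq_abs]
  have key : (∫ t in p₀.1..(p₀ + h).1, u (t, (p₀ + h).2)) - u p₀ * h.1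
      = ∫ t in p₀.1..(p₀.1 + h.1), (u (t, p₀.2 + h.2) - u p₀) := by
    rw [intervalIntegral.integral_sub]
    · simp [Prod.fst_add, Prod.snd_add, mul_comm]
    · exact (hu.comp (by continuity)).intervalIntegrable _ _
    · exact intervalIntegrable_const
  have hbound : ∀ t ∈ Set.uIoc p₀.1 (p₀.1 + h.1), ‖u (t, p₀.2 + h.2) - u p₀‖ ≤ ε := by
    intro t ht
    have htmem : |t - p₀.1| ≤ |h.1| := by
      rcases Set.mem_uIoc.mp ht with ⟨ht1, ht2⟩ | ⟨ht1, ht2⟩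
      · rw [abs_sub_le_iff]
        constructor
        · have : t ≤ p₀.1 + h.1 := ht2
          nlinarith [le_abs_self h.1, ht1.le]
        · nlinarith [le_abs_self h.1, ht1.le]
      · rw [abs_sub_le_iff]
        constructor
        · nlinarith [neg_abs_le h.1, ht2, ht1.le]
        · nlinarith [neg_abs_le h.1, ht2, ht1.le]
    have hdist : dist (t, p₀.2 + h.2) p₀ < δ := by
      rw [Prod.dist_eq]
      apply max_lt
      · rw [Real.dist_eq]
        exact lt_of_le_of_lt (le_trans htmem (le_trans h1 (le_refl _))) hnorm
      · rw [Real.dist_eq]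
        simpa using lt_of_le_of_lt h2 hnorm
    have := hδ' hdist
    rw [Real.dist_eq] at this
    simpa [Real.norm_eq_abs] using this.le
  calc ‖((∫ t in p₀.1..(p₀ + h).1, u (t, (p₀ + h).2)) - ∫ t in p₀.1..p₀.1, u (t, p₀.2))
        - ((u p₀) • ContinuousLinearMap.fst ℝ ℝ ℝ) h‖
      = ‖∫ t in p₀.1..(p₀.1 + h.1), (u (t, p₀.2 + h.2) - u p₀)‖ := by
        rw [intervalIntegral.integral_same, sub_zero, ← key]; simp [smul_eq_mul]
    _ ≤ ε * |p₀.1 + h.1 - p₀.1| := intervalIntegral.norm_integral_le_of_norm_le_const hbound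
    _ = ε * |h.1| := by ring_nf
    _ ≤ ε * ‖h‖ := by nlinarith [abs_nonneg h.1, norm_nonneg h]

def potFun (η₁ η₂ : ℝ × ℝ → ℝ) (p : ℝ × ℝ) : ℝ :=
  (∫ t in (0:ℝ)..p.1, η₁ (t, 0)) + ∫ s in (0:ℝ)..p.2, η₂ (p.1, s)

-- symmetric representation
lemma potFun_eq {η₁ η₂ : ℝ × ℝ → ℝ} (hη : ClosedOneForm η₁ η₂) (p : ℝ × ℝ) :
    potFun η₁ η₂ p = (∫ s in (0:ℝ)..p.2, η₂ (0, s)) + ∫ t in (0:ℝ)..p.1, η₁ (t, p.2) := by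
  have := closed_green hη p.1 p.2
  unfold potFun
  linarith

-- local representation around an arbitrary base point
lemma potFun_rep {η₁ η₂ : ℝ × ℝ → ℝ} (hη : ClosedOneForm η₁ η₂) (p₀ p : ℝ × ℝ) :
    potFun η₁ η₂ p = potFun η₁ η₂ p₀ + (∫ s in p₀.2..p.2, η₂ (p₀.1, s))
      + ∫ t in p₀.1..p.1, η₁ (t, p.2) := by
  have h1 : Continuous η₁ := hη.1.1.continuous
  have h2 : Continuous η₂ := hη.1.2.1.continuous
  have e1 : (∫ t in p₀.1..p.1, η₁ (t, p.2))
      = (∫ t in (0:ℝ)..p.1, η₁ (t, p.2)) - ∫ t in (0:ℝ)..p₀.1, η₁ (t, p.2) := by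
    rw [← intervalIntegral.integral_interval_sub_left
      (Continuous.intervalIntegrable (by fun_prop : Continuous fun t : ℝ => η₁ (t, p.2)) _ _)
      (Continuous.intervalIntegrable (by fun_prop : Continuous fun t : ℝ => η₁ (t, p.2)) _ _)]
  have e2 : (∫ s in p₀.2..p.2, η₂ (p₀.1, s))
      = (∫ s in (0:ℝ)..p.2, η₂ (p₀.1, s)) - ∫ s in (0:ℝ)..p₀.2, η₂ (p₀.1, s) := by
    rw [← intervalIntegral.integral_interval_sub_left
      (Continuous.intervalIntegrable (by fun_prop : Continuous fun s : ℝ => η₂ (p₀.1, s)) _ _)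
      (Continuous.intervalIntegrable (by fun_prop : Continuous fun s : ℝ => η₂ (p₀.1, s)) _ _)]
  have g1 := closed_green hη p₀.1 p.2
  rw [potFun_eq hη p, e1, e2]
  unfold potFun
  linarith

-- the full derivative of the potential
lemma potFun_hasFDerivAt {η₁ η₂ : ℝ × ℝ → ℝ} (hη : ClosedOneForm η₁ η₂) (p : ℝ × ℝ) :
    HasFDerivAt (potFun η₁ η₂)
      ((η₁ p) • ContinuousLinearMap.fst ℝ ℝ ℝ + (η₂ p) • ContinuousLinearMap.snd ℝ ℝ ℝ) p := by
  have h1 : Continuous η₁ := hη.1.1.continuous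
  have h2 : Continuous η₂ := hη.1.2.1.continuous
  have hrep : potFun η₁ η₂ = fun q : ℝ × ℝ => potFun η₁ η₂ p
      + (∫ s in p.2..q.2, η₂ (p.1, s)) + ∫ t in p.1..q.1, η₁ (t, q.2) := by
    funext q; exact potFun_rep hη p q
  rw [hrep]
  have d2 : HasFDerivAt (fun q : ℝ × ℝ => ∫ s in p.2..q.2, η₂ (p.1, s))
      ((η₂ p) • ContinuousLinearMap.snd ℝ ℝ ℝ) p := by
    have hd : HasDerivAt (fun y => ∫ s in p.2..y, η₂ (p.1, s)) (η₂ p) p.2 := by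
      have := ((h2.comp (by continuity : Continuous fun y : ℝ => (p.1, y))).integral_hasStrictDerivAt
        p.2 p.2).hasDerivAt
      simpa using this
    have := hd.hasFDerivAt.comp p (hasFDerivAt_snd (𝕜 := ℝ) (p := p))
    refine this.congr_fderiv ?_
    refine ContinuousLinearMap.ext fun v => ?_
    simp [smul_eq_mul, mul_comm]
  have d3 : HasFDerivAt (fun q : ℝ × ℝ => ∫ t in p.1..q.1, η₁ (t, q.2))
      ((η₁ p) • ContinuousLinearMap.fst ℝ ℝ ℝ) p := hasFDerivAt_parint η₁ h1 p
  have := ((hasFDerivAt_const (potFun η₁ η₂ p) p).add d2).add d3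
  refine this.congr_fderiv ?_
  refine ContinuousLinearMap.ext fun v => ?_
  simp [smul_eq_mul]
  ring

-- line-integral constancy
lemma line_const_x {η₁ η₂ : ℝ × ℝ → ℝ} (hη : ClosedOneForm η₁ η₂) (y : ℝ) :
    (∫ t in (0:ℝ)..1, η₁ (t, y)) = ∫ t in (0:ℝ)..1, η₁ (t, 0) := by
  have key := closed_green hη 1 y
  have hper : ∀ s : ℝ, η₂ (1, s) = η₂ (0, s) := by
    intro s
    have := hη.1.2.2.2 (0, s) (1, 0)
    simpa using this
  have : (∫ s in (0:ℝ)..y, η₂ (1, s)) = ∫ s in (0:ℝ)..y, η₂ (0, s) := by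
    simp only [hper]
  linarith

lemma line_const_y {η₁ η₂ : ℝ × ℝ → ℝ} (hη : ClosedOneForm η₁ η₂) (x : ℝ) :
    (∫ s in (0:ℝ)..1, η₂ (x, s)) = ∫ s in (0:ℝ)..1, η₂ (0, s) := by
  have key := closed_green hη x 1
  have hper : ∀ t : ℝ, η₁ (t, 1) = η₁ (t, 0) := by
    intro t
    have := hη.1.2.2.1 (t, 0) (0, 1)
    simpa using this
  have : (∫ t in (0:ℝ)..x, η₁ (t, 1)) = ∫ t in (0:ℝ)..x, η₁ (t, 0) := by
    simp only [hper]
  linarith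

-- quasi-periodicity of the potential
lemma potFun_add_x {η₁ η₂ : ℝ × ℝ → ℝ} (hη : ClosedOneForm η₁ η₂) (p : ℝ × ℝ) :
    potFun η₁ η₂ (p.1 + 1, p.2) = potFun η₁ η₂ p + ∫ t in (0:ℝ)..1, η₁ (t, 0) := by
  have h1 : Continuous η₁ := hη.1.1.continuous
  have hper : Function.Periodic (fun t => η₁ (t, p.2)) 1 := by
    intro t
    have := hη.1.2.2.1 (t, p.2) (1, 0)
    simpa using this
  have e1 : potFun η₁ η₂ (p.1 + 1, p.2)
      = (∫ s in (0:ℝ)..p.2, η₂ (0, s)) + ∫ t in (0:ℝ)..(p.1+1), η₁ (t, p.2) := by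
    simpa using potFun_eq hη (p.1 + 1, p.2)
  have e2 : potFun η₁ η₂ p
      = (∫ s in (0:ℝ)..p.2, η₂ (0, s)) + ∫ t in (0:ℝ)..p.1, η₁ (t, p.2) := potFun_eq hη p
  have hadd : (∫ t in (0:ℝ)..p.1, η₁ (t, p.2)) + (∫ t in p.1..(p.1+1), η₁ (t, p.2))
      = ∫ t in (0:ℝ)..(p.1+1), η₁ (t, p.2) := by
    apply intervalIntegral.integral_add_adjacent_intervals <;>
      exact Continuous.intervalIntegrable (by fun_prop) _ _
  have hshift : (∫ t in p.1..(p.1+1), η₁ (t, p.2)) = ∫ t in (0:ℝ)..(0+1), η₁ (t, p.2) :=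
    hper.intervalIntegral_add_eq p.1 0
  have hzero : (∫ t in (0:ℝ)..(0+1:ℝ), η₁ (t, p.2)) = ∫ t in (0:ℝ)..1, η₁ (t, 0) := by
    rw [zero_add]; exact line_const_x hη p.2
  rw [e1, e2]
  linarith

lemma potFun_add_y {η₁ η₂ : ℝ × ℝ → ℝ} (hη : ClosedOneForm η₁ η₂) (p : ℝ × ℝ) :
    potFun η₁ η₂ (p.1, p.2 + 1) = potFun η₁ η₂ p + ∫ s in (0:ℝ)..1, η₂ (0, s) := by
  have h2 : Continuous η₂ := hη.1.2.1.continuous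
  have hper : Function.Periodic (fun s => η₂ (p.1, s)) 1 := by
    intro s
    have := hη.1.2.2.2 (p.1, s) (0, 1)
    simpa using this
  have hadd : (∫ s in (0:ℝ)..p.2, η₂ (p.1, s)) + (∫ s in p.2..(p.2+1), η₂ (p.1, s))
      = ∫ s in (0:ℝ)..(p.2+1), η₂ (p.1, s) := by
    apply intervalIntegral.integral_add_adjacent_intervals <;>
      exact Continuous.intervalIntegrable (by fun_prop) _ _
  have hshift : (∫ s in p.2..(p.2+1), η₂ (p.1, s)) = ∫ s in (0:ℝ)..(0+1), η₂ (p.1, s) :=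
    hper.intervalIntegral_add_eq p.2 0
  have hzero : (∫ s in (0:ℝ)..(0+1:ℝ), η₂ (p.1, s)) = ∫ s in (0:ℝ)..1, η₂ (0, s) := by
    rw [zero_add]; exact line_const_y hη p.1
  unfold potFun
  simp only
  linarith

/-- Two closed 1-forms annihilating a densely-non-vanishing smooth
periodic vector field have linearly dependent period vectors. -/
theorem stmt_7 (X : ℝ × ℝ → ℝ × ℝ) (hX : SmoothVF X)
    (hdense : Dense {p : ℝ × ℝ | X p ≠ 0})
    (ω₁ ω₂ η₁ η₂ : ℝ × ℝ → ℝ)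
    (hω : ClosedOneForm ω₁ ω₂) (hη : ClosedOneForm η₁ η₂)
    (hannω : ∀ p : ℝ × ℝ, ω₁ p * (X p).1 + ω₂ p * (X p).2 = 0)
    (hannη : ∀ p : ℝ × ℝ, η₁ p * (X p).1 + η₂ p * (X p).2 = 0) :
    ¬ LinearIndependent ℝ ![PeriodVector ω₁ ω₂, PeriodVector η₁ η₂] := by
  intro hLI
  have hω₁c : Continuous ω₁ := hω.1.1.continuous
  have hω₂c : Continuous ω₂ := hω.1.2.1.continuous
  have hη₁c : Continuous η₁ := hη.1.1.continuous
  have hη₂c : Continuous η₂ := hη.1.2.1.continuous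
  -- Step 1 : ω ∧ η = 0 pointwise
  have hcross : ∀ p : ℝ × ℝ, ω₁ p * η₂ p - ω₂ p * η₁ p = 0 := by
    have hc : Continuous fun p : ℝ × ℝ => ω₁ p * η₂ p - ω₂ p * η₁ p := by fun_prop
    have heq := Continuous.ext_on hdense hc continuous_const (g := fun _ => (0:ℝ)) ?_
    · exact fun p => congrFun heq p
    · intro p hp
      have hxne : (X p).1 ≠ 0 ∨ (X p).2 ≠ 0 := by
        by_contra h
        push_neg at h
        exact hp (Prod.ext h.1 h.2)
      rcases hxne with hx | hx
      · have h0 : (ω₁ p * η₂ p - ω₂ p * η₁ p) * (X p).1 = 0 := by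
          linear_combination (η₂ p) * hannω p - (ω₂ p) * hannη p
        exact (mul_eq_zero.mp h0).resolve_right hx
      · have h0 : (ω₁ p * η₂ p - ω₂ p * η₁ p) * (X p).2 = 0 := by
          linear_combination (ω₁ p) * hannη p - (η₁ p) * hannω p
        exact (mul_eq_zero.mp h0).resolve_right hx
  -- notation
  set a := ∫ t in (0:ℝ)..1, ω₁ (t, 0) with ha
  set b := ∫ t in (0:ℝ)..1, ω₂ (0, t) with hb
  set c := ∫ t in (0:ℝ)..1, η₁ (t, 0) with hc'
  set d := ∫ t in (0:ℝ)..1, η₂ (0, t) with hd'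
  set P := potFun η₁ η₂ with hP
  have hPd : ∀ p : ℝ × ℝ, HasFDerivAt P
      ((η₁ p) • ContinuousLinearMap.fst ℝ ℝ ℝ + (η₂ p) • ContinuousLinearMap.snd ℝ ℝ ℝ) p :=
    fun p => potFun_hasFDerivAt hη p
  have hPc : Continuous P :=
    continuous_iff_continuousAt.mpr fun p => (hPd p).continuousAt
  have hωd1 : Differentiable ℝ ω₁ := hω.1.1.differentiable (by simp)
  have hωd2 : Differentiable ℝ ω₂ := hω.1.2.1.differentiable (by simp)
  -- divergence theorem for F = (-P ω₂, P ω₁)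
  have hfd : ∀ p : ℝ × ℝ, HasFDerivAt (fun q => -(P q * ω₂ q))
      (-(P p • fderiv ℝ ω₂ p + ω₂ p •
        ((η₁ p) • ContinuousLinearMap.fst ℝ ℝ ℝ + (η₂ p) • ContinuousLinearMap.snd ℝ ℝ ℝ))) p :=
    fun p => ((hPd p).mul (hωd2 p).hasFDerivAt).neg
  have hgd : ∀ p : ℝ × ℝ, HasFDerivAt (fun q => P q * ω₁ q)
      (P p • fderiv ℝ ω₁ p + ω₁ p •
        ((η₁ p) • ContinuousLinearMap.fst ℝ ℝ ℝ + (η₂ p) • ContinuousLinearMap.snd ℝ ℝ ℝ)) p :=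
    fun p => (hPd p).mul (hωd1 p).hasFDerivAt
  have hdiv0 : ∀ p : ℝ × ℝ,
      (-(P p • fderiv ℝ ω₂ p + ω₂ p •
        ((η₁ p) • ContinuousLinearMap.fst ℝ ℝ ℝ + (η₂ p) • ContinuousLinearMap.snd ℝ ℝ ℝ))) (1, 0)
      + (P p • fderiv ℝ ω₁ p + ω₁ p •
        ((η₁ p) • ContinuousLinearMap.fst ℝ ℝ ℝ + (η₂ p) • ContinuousLinearMap.snd ℝ ℝ ℝ)) (0, 1)
      = 0 := by
    intro p
    have h1 := hω.2 p
    have h2 := hcross p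
    simp only [ContinuousLinearMap.neg_apply, ContinuousLinearMap.add_apply,
      ContinuousLinearMap.smul_apply, ContinuousLinearMap.coe_fst', ContinuousLinearMap.coe_snd',
      smul_eq_mul]
    linear_combination (-(P p)) * h1 + h2
  have key := integral2_divergence_prod_of_hasFDerivAt_off_countable
    (fun q => -(P q * ω₂ q)) (fun q => P q * ω₁ q)
    (fun p => -(P p • fderiv ℝ ω₂ p + ω₂ p •
        ((η₁ p) • ContinuousLinearMap.fst ℝ ℝ ℝ + (η₂ p) • ContinuousLinearMap.snd ℝ ℝ ℝ)))
    (fun p => P p • fderiv ℝ ω₁ p + ω₁ p •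
        ((η₁ p) • ContinuousLinearMap.fst ℝ ℝ ℝ + (η₂ p) • ContinuousLinearMap.snd ℝ ℝ ℝ))
    0 0 1 1 ∅ Set.countable_empty
    (by fun_prop) (by fun_prop)
    (fun p _ => hfd p) (fun p _ => hgd p)
    (by
      have : (fun p : ℝ × ℝ =>
          (-(P p • fderiv ℝ ω₂ p + ω₂ p •
            ((η₁ p) • ContinuousLinearMap.fst ℝ ℝ ℝ + (η₂ p) • ContinuousLinearMap.snd ℝ ℝ ℝ))) (1, 0)
          + (P p • fderiv ℝ ω₁ p + ω₁ p •
            ((η₁ p) • ContinuousLinearMap.fst ℝ ℝ ℝ + (η₂ p) • ContinuousLinearMap.snd ℝ ℝ ℝ)) (0, 1))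
          = fun _ => (0:ℝ) := funext hdiv0
      rw [this]; exact integrableOn_zero)
  simp only [hdiv0, intervalIntegral.integral_zero] at key
  -- boundary terms
  have hg1 : ∀ x : ℝ, P (x, 1) * ω₁ (x, 1) = P (x, 0) * ω₁ (x, 0) + d * ω₁ (x, 0) := by
    intro x
    have hpy : P (x, 1) = P (x, 0) + d := by
      have := potFun_add_y hη (x, 0)
      simpa [hP, hd'] using this
    have hωper : ω₁ (x, 1) = ω₁ (x, 0) := by
      have := hω.1.2.2.1 (x, 0) (0, 1)
      simpa using this
    rw [hpy, hωper]; ring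
  have hf1 : ∀ y : ℝ, -(P (1, y) * ω₂ (1, y)) = -(P (0, y) * ω₂ (0, y)) - c * ω₂ (0, y) := by
    intro y
    have hpx : P (1, y) = P (0, y) + c := by
      have := potFun_add_x hη (0, y)
      simpa [hP, hc'] using this
    have hωper : ω₂ (1, y) = ω₂ (0, y) := by
      have := hω.1.2.2.2 (0, y) (1, 0)
      simpa using this
    rw [hpx, hωper]; ring
  -- rewrite boundary integrals
  have e1 : (∫ x in (0:ℝ)..1, P (x, 1) * ω₁ (x, 1))
      = (∫ x in (0:ℝ)..1, P (x, 0) * ω₁ (x, 0)) + d * a := by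
    have : (fun x : ℝ => P (x, 1) * ω₁ (x, 1))
        = fun x => P (x, 0) * ω₁ (x, 0) + d * ω₁ (x, 0) := funext hg1
    rw [this, intervalIntegral.integral_add (Continuous.intervalIntegrable (by fun_prop) _ _)
      (Continuous.intervalIntegrable (by fun_prop) _ _),
      intervalIntegral.integral_const_mul]
  have e2 : (∫ y in (0:ℝ)..1, -(P (1, y) * ω₂ (1, y)))
      = (∫ y in (0:ℝ)..1, -(P (0, y) * ω₂ (0, y))) - c * b := by
    have : (fun y : ℝ => -(P (1, y) * ω₂ (1, y)))
        = fun y => -(P (0, y) * ω₂ (0, y)) - c * ω₂ (0, y) := funext hf1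
    rw [this, intervalIntegral.integral_sub (Continuous.intervalIntegrable (by fun_prop) _ _)
      (Continuous.intervalIntegrable (by fun_prop) _ _),
      intervalIntegral.integral_const_mul]
  rw [e1, e2] at key
  have hmain : d * a - c * b = 0 := by linarith
  -- conclude linear dependence contradiction
  have hv0 : PeriodVector ω₁ ω₂ = (a, b) := rfl
  have hv1 : PeriodVector η₁ η₂ = (c, d) := rfl
  have hli := Fintype.linearIndependent_iff.mp hLI
  have hzero1 : ∀ i, (![d, -b] : Fin 2 → ℝ) i = 0 := by
    apply hli
    simp [Fin.sum_univ_two, hv0, hv1, Prod.smul_mk, smul_eq_mul, Prod.ext_iff]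
    constructor <;> linarith
  have hzero2 : ∀ i, (![c, -a] : Fin 2 → ℝ) i = 0 := by
    apply hli
    simp [Fin.sum_univ_two, hv0, hv1, Prod.smul_mk, smul_eq_mul, Prod.ext_iff]
    constructor <;> linarith
  have hd0 : d = 0 := by simpa using hzero1 0
  have hb0 : b = 0 := by have := hzero1 1; simpa using neg_eq_zero.mp (by simpa using this)
  have hc0 : c = 0 := by simpa using hzero2 0
  have ha0 : a = 0 := by have := hzero2 1; simpa using neg_eq_zero.mp (by simpa using this)
  have := hLI.ne_zero 0
  apply this
  simp [hv0, ha0, hb0, Prod.ext_iff]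
end
end

section
/- Let C = (C₁, C₂) : ℝ → ℝ² be a differentiable curve with C₁'(t) = cos(C₁(t)) and C₂'(t) = 1 for all t ∈ ℝ, and suppose cos(C₁(0)) ≠ 0. Then for every T > 0 and every k ∈ ℤ², one has C(T) ≠ C(0) + 2πk. In particular, the vector field (x,y) ↦ (cos x, 1) on the torus ℝ²/2πℤ² has no periodic integral curve through any point p with cos(p₁) ≠ 0. -/
open MeasureTheory

noncomputable section

/-- An integral curve of the vector field `(x,y) ↦ (cos x, 1)` starting
at a point with `cos(C₁(0)) ≠ 0` never returns to its starting point modulo `2πℤ²`. -/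
theorem stmt_8 (C : ℝ → ℝ × ℝ)
    (hC : ∀ t : ℝ, HasDerivAt C (Real.cos (C t).1, 1) t)
    (h0 : Real.cos (C 0).1 ≠ 0) :
    ∀ T > (0:ℝ), ∀ k : ℤ × ℤ,
      C T ≠ C 0 + (2 * Real.pi * (k.1 : ℝ), 2 * Real.pi * (k.2 : ℝ)) := by
  intro T hT k hEq
  -- first coordinate
  have hx : ∀ t : ℝ, HasDerivAt (fun t => (C t).1) (Real.cos (C t).1) t := by
    intro t
    have := (ContinuousLinearMap.fst ℝ ℝ ℝ).hasFDerivAt.comp t (hC t).hasFDerivAt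
    simpa [Function.comp_def] using this.hasDerivAt
  have hs : ∀ t : ℝ, HasDerivAt (fun t => Real.sin (C t).1)
      (Real.cos (C t).1 ^ 2) t := by
    intro t
    have := (Real.hasDerivAt_sin ((C t).1)).comp t (hx t)
    simpa [sq, Function.comp_def] using this
  have hCc : Continuous C := continuous_iff_continuousAt.2 fun t => (hC t).continuousAt
  have hcont : Continuous fun t => Real.cos (C t).1 ^ 2 :=
    (Real.continuous_cos.comp (continuous_fst.comp hCc)).pow 2
  have hint : (∫ t in (0:ℝ)..T, Real.cos (C t).1 ^ 2) =
      Real.sin (C T).1 - Real.sin (C 0).1 :=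
    intervalIntegral.integral_eq_sub_of_hasDerivAt (fun t _ => hs t)
      (hcont.intervalIntegrable 0 T)
  have hpos : (0:ℝ) < ∫ t in (0:ℝ)..T, Real.cos (C t).1 ^ 2 := by
    have := intervalIntegral.integral_lt_integral_of_continuousOn_of_le_of_exists_lt
      (f := fun _ => (0:ℝ)) (g := fun t => Real.cos (C t).1 ^ 2) hT
      continuousOn_const hcont.continuousOn
      (fun t _ => sq_nonneg _)
      ⟨0, ⟨le_refl 0, hT.le⟩, by positivity⟩
    simpa using this
  have h1 : (C T).1 = (C 0).1 + 2 * Real.pi * (k.1 : ℝ) := by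
    have := congrArg Prod.fst hEq
    simpa using this
  have : Real.sin (C T).1 = Real.sin (C 0).1 := by
    rw [h1]
    have : (C 0).1 + 2 * Real.pi * (k.1 : ℝ) = (C 0).1 + (k.1 : ℤ) * (2 * Real.pi) := by
      ring
    rw [this, Real.sin_add_int_mul_two_pi]
  rw [hint, this] at hpos
  simp at hpos
end
end

section
/- Let U ⊆ ℝ³ be open, let ρ : U → ℝ be smooth with ∇ρ(p) ≠ 0 for all p ∈ U, and let B : U → ℝ³ be smooth with ⟨B(p), ∇ρ(p)⟩ = 0 for all p ∈ U. Define N = ∇ρ/‖∇ρ‖ and u = −log ‖∇ρ‖ on U. Then for every p ∈ U: ⟨DB(p)·N(p) − DN(p)·B(p), N(p)⟩ = ⟨∇u(p), B(p)⟩. (In the paper's notation: the normal surface derivative ∂ₙB = ⟨[N,B], N⟩ of B along the level surfaces of ρ equals du(B), so u = −log‖∇ρ‖ solves the cohomological equation B(u) = ∂ₙB.) -/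
open MeasureTheory

noncomputable section

open scoped RealInnerProductSpace

/-- For a field `B` orthogonal to the gradient of a regular function `ρ`,
the function `u = -log ‖∇ρ‖` solves the cohomological equation `B(u) = ∂ₙB`, where
`∂ₙB = ⟨[N,B], N⟩` with `N = ∇ρ/‖∇ρ‖`. -/
theorem stmt_9 (U : Set (EuclideanSpace ℝ (Fin 3))) (hU : IsOpen U)
    (ρ : EuclideanSpace ℝ (Fin 3) → ℝ)
    (B : EuclideanSpace ℝ (Fin 3) → EuclideanSpace ℝ (Fin 3))
    (hρ : ContDiffOn ℝ (⊤ : ℕ∞) ρ U) (hB : ContDiffOn ℝ (⊤ : ℕ∞) B U)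
    (hreg : ∀ p ∈ U, gradient ρ p ≠ 0)
    (horth : ∀ p ∈ U, ⟪B p, gradient ρ p⟫ = 0)
    (N : EuclideanSpace ℝ (Fin 3) → EuclideanSpace ℝ (Fin 3))
    (hN : ∀ p, N p = ‖gradient ρ p‖⁻¹ • gradient ρ p)
    (u : EuclideanSpace ℝ (Fin 3) → ℝ)
    (hu : ∀ p, u p = -Real.log ‖gradient ρ p‖) :
    ∀ p ∈ U,
      ⟪fderiv ℝ B p (N p) - fderiv ℝ N p (B p), N p⟫ = ⟪gradient u p, B p⟫ := by
  
  intro p hp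
  have hUp : U ∈ nhds p := hU.mem_nhds hp
  -- second derivative of ρ
  have hρ' : ContDiffAt ℝ (⊤ : ℕ∞) (fderiv ℝ ρ) p :=
    (hρ.contDiffAt hUp).fderiv_right (by simp)
  set f'' := fderiv ℝ (fderiv ℝ ρ) p with hf''def
  have hf'' : HasFDerivAt (fderiv ℝ ρ) f'' p :=
    (hρ'.differentiableAt (by simp)).hasFDerivAt
  have hev : ∀ᶠ q in nhds p, HasFDerivAt ρ (fderiv ℝ ρ q) q := by
    filter_upwards [hU.eventually_mem hp] with q hq
    exact ((hρ.contDiffAt (hU.mem_nhds hq)).differentiableAt (by simp)).hasFDerivAt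
  have hsym0 : ∀ v w, f'' v w = f'' w v :=
    second_derivative_symmetric_of_eventually hev hf''
  -- the gradient field and its derivative H
  set T := InnerProductSpace.toDual ℝ (EuclideanSpace ℝ (Fin 3)) with hT
  set H : EuclideanSpace ℝ (Fin 3) →L[ℝ] EuclideanSpace ℝ (Fin 3) :=
    (T.symm.toContinuousLinearEquiv : _ ≃L[ℝ] _).toContinuousLinearMap.comp f'' with hHdef
  have hgH : HasFDerivAt (fun q => gradient ρ q) H p := by
    have := ((T.symm.toContinuousLinearEquiv :
        _ ≃L[ℝ] _).toContinuousLinearMap.hasFDerivAt (x := fderiv ℝ ρ p)).comp p hf''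
    exact this
  have hHapp : ∀ v, H v = T.symm (f'' v) := fun v => rfl
  have hsym : ∀ v w, ⟪H v, w⟫ = ⟪H w, v⟫ := by
    intro v w
    have h1 : ∀ v w, ⟪H v, w⟫ = f'' v w := by
      intro v w
      rw [hHapp, hT, InnerProductSpace.toDual_symm_apply]
    rw [h1, h1, hsym0]
  -- abbreviations
  set G := gradient ρ p with hG
  have hG0 : G ≠ 0 := hreg p hp
  set n : ℝ := ‖G‖ with hn
  have hnpos : 0 < n := norm_pos_iff.mpr hG0
  have hcpos : (0:ℝ) < ⟪G, G⟫ := by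
    rw [real_inner_self_eq_norm_sq]; positivity
  -- derivative of B
  have hBd : HasFDerivAt B (fderiv ℝ B p) p :=
    ((hB.contDiffAt hUp).differentiableAt (by simp)).hasFDerivAt
  -- differentiating the orthogonality relation
  have hinner : HasFDerivAt (fun q => ⟪B q, gradient ρ q⟫)
      ((fderivInnerCLM ℝ (B p, G)).comp ((fderiv ℝ B p).prod H)) p :=
    hBd.inner ℝ hgH
  have hzero : (fun q => ⟪B q, gradient ρ q⟫) =ᶠ[nhds p] fun _ => (0:ℝ) := by
    filter_upwards [hU.eventually_mem hp] with q hq using horth q hq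
  have hCzero : ((fderivInnerCLM ℝ (B p, G)).comp ((fderiv ℝ B p).prod H))
      = (0 : _ →L[ℝ] ℝ) :=
    (hinner.congr_of_eventuallyEq hzero.symm).unique (hasFDerivAt_const 0 p)
  have key : ∀ w, ⟪fderiv ℝ B p w, G⟫ = -⟪B p, H w⟫ := by
    intro w
    have h0 := DFunLike.congr_fun hCzero w
    simp only [ContinuousLinearMap.coe_comp', Function.comp_apply,
      ContinuousLinearMap.prod_apply, fderivInnerCLM_apply,
      ContinuousLinearMap.zero_apply] at h0
    linarith
  -- derivative of ⟪g, g⟫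
  set Dφ := (fderivInnerCLM ℝ (G, G)).comp (H.prod H) with hDφ
  have hφ : HasFDerivAt (fun q => ⟪gradient ρ q, gradient ρ q⟫) Dφ p :=
    hgH.inner ℝ hgH
  have hDφapp : ∀ w, Dφ w = ⟪G, H w⟫ + ⟪H w, G⟫ := by
    intro w
    simp [hDφ, fderivInnerCLM_apply]
  -- derivative of u
  set Lu : EuclideanSpace ℝ (Fin 3) →L[ℝ] ℝ := -((1/2 : ℝ) • ((⟪G, G⟫)⁻¹ • Dφ)) with hLu
  have hueq : u = fun q => -((1/2) * Real.log ⟪gradient ρ q, gradient ρ q⟫) := by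
    funext q
    rw [hu q, real_inner_self_eq_norm_sq, Real.log_pow]
    push_cast; ring
  have hud : HasFDerivAt u Lu p := by
    rw [hueq, hLu]
    exact ((hφ.log hcpos.ne').const_mul (1/2 : ℝ)).neg
  -- the RHS
  have hRHS : ⟪gradient u p, B p⟫ = Lu (B p) := by
    have h1 : gradient u p = T.symm (fderiv ℝ u p) := rfl
    rw [h1, hud.fderiv, hT, InnerProductSpace.toDual_symm_apply]
  -- derivative of N
  have hNeq : N = fun q => Real.exp (u q) • gradient ρ q := by
    funext q
    rw [hN q, hu q, Real.exp_neg]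
    by_cases h : gradient ρ q = 0
    · simp [h]
    · rw [Real.exp_log (norm_pos_iff.mpr h)]
  have hNd : HasFDerivAt N
      (Real.exp (u p) • H + (Real.exp (u p) • Lu).smulRight G) p := by
    rw [hNeq]
    exact (hud.exp.smul hgH)
  -- scalar abbreviations
  set a : ℝ := ⟪H (B p), G⟫ with ha
  have hDφB : Dφ (B p) = 2 * a := by
    rw [ha, hDφapp, real_inner_comm G (H (B p))]; ring
  have hLuB : Lu (B p) = -(a / n ^ 2) := by
    rw [hLu]
    simp only [ContinuousLinearMap.neg_apply, ContinuousLinearMap.smul_apply, smul_eq_mul]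
    rw [hDφB, real_inner_self_eq_norm_sq, ← hn]
    field_simp
  have hexpu : Real.exp (u p) = n⁻¹ := by
    rw [hu p, Real.exp_neg, Real.exp_log hnpos, hn]
  -- value of ⟪DB (N p), N p⟫
  have hB1 : ⟪fderiv ℝ B p (N p), N p⟫ = n⁻¹ * (n⁻¹ * (-a)) := by
    rw [hN p, ← hG, ← hn, _root_.map_smul, real_inner_smul_left, real_inner_smul_right, key G]
    have : ⟪B p, H G⟫ = a := by
      rw [real_inner_comm, hsym]
    rw [this]
  -- value of ⟪DN (B p), N p⟫
  have hN1 : ⟪fderiv ℝ N p (B p), N p⟫ = 0 := by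
    rw [hNd.fderiv, hN p, ← hG, ← hn]
    simp only [ContinuousLinearMap.add_apply, ContinuousLinearMap.smul_apply,
      ContinuousLinearMap.smulRight_apply]
    rw [inner_add_left, real_inner_smul_left, real_inner_smul_right,
      real_inner_smul_left, real_inner_smul_right, smul_eq_mul]
    rw [hexpu, hLuB, ← ha, real_inner_self_eq_norm_sq, ← hn]
    field_simp
    ring
  -- conclude
  rw [inner_sub_left, hB1, hN1, hRHS, hLuB, sub_zero, div_eq_mul_inv, pow_two, mul_inv]
  ring
end
end

section
/- Let P : ℝ² → ℝ be smooth, ℤ²-periodic, with P > 0 everywhere, and let X = (X₁, X₂) : ℝ² → ℝ² be a P-harmonic vector field on the flat torus with X(p) ≠ (0,0) for every p. Define Y = (−X₂, X₁) / (P·(X₁² + X₂²)). Then X(p) and Y(p) are linearly independent for every p, and the Lie bracket [X/‖X‖², Y] vanishes identically, where ‖X‖² = X₁² + X₂². -/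
open MeasureTheory

noncomputable section

lemma hasFDerivAt_inv_comp' {h : ℝ × ℝ → ℝ} {D : ℝ × ℝ →L[ℝ] ℝ} {p : ℝ × ℝ}
    (hh : HasFDerivAt h D p) (h0 : h p ≠ 0) :
    HasFDerivAt (fun q => (h q)⁻¹) ((-(h p ^ 2)⁻¹) • D) p := by
  have h1 := (hasFDerivAt_inv h0).comp p hh
  have hD : ((ContinuousLinearMap.toSpanSingleton ℝ (-(h p ^ 2)⁻¹)).comp D)
      = (-(h p ^ 2)⁻¹) • D := by
    refine ContinuousLinearMap.ext fun w => ?_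
    simp [mul_comm]
  rw [hD] at h1
  exact h1

lemma hasFDerivAt_sq' {h : ℝ × ℝ → ℝ} {D : ℝ × ℝ →L[ℝ] ℝ} {p : ℝ × ℝ}
    (hh : HasFDerivAt h D p) :
    HasFDerivAt (fun q => h q ^ 2) ((2 * h p) • D) p := by
  have h2 := hh.mul hh
  have he : (fun q => h q ^ 2) = fun q => h q * h q := by ext q; ring
  have hD : (h p • D + h p • D) = (2 * h p) • D := by
    refine ContinuousLinearMap.ext fun w => ?_
    simp
    ring
  rw [he]
  rw [hD] at h2
  exact h2

lemma clm_expand' {M : Type*} [NormedAddCommGroup M] [NormedSpace ℝ M]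
    (L : ℝ × ℝ →L[ℝ] M) (a b : ℝ) :
    L (a, b) = a • L (1, 0) + b • L (0, 1) := by
  have h : ((a, b) : ℝ × ℝ) = a • ((1 : ℝ), (0 : ℝ)) + b • ((0 : ℝ), (1 : ℝ)) := by
    simp [Prod.ext_iff]
  rw [h, map_add, _root_.map_smul, _root_.map_smul]

set_option maxHeartbeats 1000000 in
/-- For a nowhere-vanishing `P`-harmonic vector field `X`, the field
`Y = X^⊥/(P‖X‖²)` is pointwise independent of `X` and commutes with `X/‖X‖²`. -/
theorem stmt_11 (P : ℝ × ℝ → ℝ)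
    (hP : ContDiff ℝ (⊤ : ℕ∞) P) (hPper : ZPeriodic P) (hPpos : ∀ p, 0 < P p)
    (X : ℝ × ℝ → ℝ × ℝ) (hX : PHarmonicVF P X)
    (hnv : ∀ p : ℝ × ℝ, X p ≠ 0)
    (Y : ℝ × ℝ → ℝ × ℝ)
    (hY : ∀ p : ℝ × ℝ,
      Y p = (P p * ((X p).1 ^ 2 + (X p).2 ^ 2))⁻¹ • (-(X p).2, (X p).1)) :
    (∀ p : ℝ × ℝ, LinearIndependent ℝ ![X p, Y p]) ∧
    (∀ p : ℝ × ℝ,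
      fderiv ℝ Y p (((X p).1 ^ 2 + (X p).2 ^ 2)⁻¹ • X p) -
        fderiv ℝ (fun q => ((X q).1 ^ 2 + (X q).2 ^ 2)⁻¹ • X q) p (Y p) = 0) := by
  obtain ⟨⟨hXs, _⟩, hcl, hdiv⟩ := hX
  constructor
  · intro p
    obtain ⟨a, b, hab⟩ : ∃ a b, X p = (a, b) := ⟨_, _, rfl⟩
    have hN0 : a ^ 2 + b ^ 2 ≠ 0 := by
      rcases eq_or_ne a 0 with h1 | h1
      · have h2 : b ≠ 0 := fun h2 => hnv p (by rw [hab, h1, h2]; rfl)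
        positivity
      · positivity
    have hP0 : P p ≠ 0 := (hPpos p).ne'
    have hc0 : (P p * (a ^ 2 + b ^ 2))⁻¹ ≠ 0 := inv_ne_zero (mul_ne_zero hP0 hN0)
    have hYp : Y p = ((P p * (a ^ 2 + b ^ 2))⁻¹ * -b, (P p * (a ^ 2 + b ^ 2))⁻¹ * a) := by
      rw [hY p, hab]
      simp [Prod.ext_iff]
    rw [linearIndependent_fin2]
    constructor
    · simp only [Matrix.cons_val_one, Matrix.head_cons]
      rw [hYp]
      intro h
      rw [Prod.ext_iff] at h
      simp only [Matrix.cons_val_zero, Prod.fst_zero, Prod.snd_zero, mul_eq_zero] at h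
      rcases h.1 with h1 | h1
      · exact hc0 h1
      · rcases h.2 with h2 | h2
        · exact hc0 h2
        · exact hnv p (by rw [hab, h2, neg_eq_zero.mp h1]; rfl)
    · intro t
      simp only [Matrix.cons_val_one, Matrix.head_cons, Matrix.cons_val_zero]
      rw [hYp, hab]
      intro h
      rw [Prod.ext_iff] at h
      simp only [Prod.smul_fst, Prod.smul_snd, smul_eq_mul] at h
      have h1 := h.1
      have h2 := h.2
      exact hN0 (by linear_combination (-a) * h1 + (-b) * h2)
  · intro p
    have hXd : HasFDerivAt X (fderiv ℝ X p) p := (hXs.differentiable (by simp) p).hasFDerivAt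
    have hPd : HasFDerivAt P (fderiv ℝ P p) p := (hP.differentiable (by simp) p).hasFDerivAt
    set DX := fderiv ℝ X p with hDXdef
    set DP := fderiv ℝ P p with hDPdef
    have hu : HasFDerivAt (fun q => (X q).1) ((ContinuousLinearMap.fst ℝ ℝ ℝ).comp DX) p :=
      hXd.fst
    have hv : HasFDerivAt (fun q => (X q).2) ((ContinuousLinearMap.snd ℝ ℝ ℝ).comp DX) p :=
      hXd.snd
    have hN0 : (X p).1 ^ 2 + (X p).2 ^ 2 ≠ 0 := by
      rcases eq_or_ne (X p).1 0 with h1 | h1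
      · have h2 : (X p).2 ≠ 0 := fun h2 => hnv p (by apply Prod.ext <;> simp [h1, h2])
        positivity
      · positivity
    have hP0 : P p ≠ 0 := (hPpos p).ne'
    have hPN0 : P p * ((X p).1 ^ 2 + (X p).2 ^ 2) ≠ 0 := mul_ne_zero hP0 hN0
    have hN : HasFDerivAt (fun q => (X q).1 ^ 2 + (X q).2 ^ 2)
        ((2 * (X p).1) • ((ContinuousLinearMap.fst ℝ ℝ ℝ).comp DX) +
          (2 * (X p).2) • ((ContinuousLinearMap.snd ℝ ℝ ℝ).comp DX)) p :=
      (hasFDerivAt_sq' hu).add (hasFDerivAt_sq' hv)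
    have hPN := hPd.mul hN
    have hcinv := hasFDerivAt_inv_comp' hPN hPN0
    have hW : HasFDerivAt (fun q => (-(X q).2, (X q).1))
        ((-((ContinuousLinearMap.snd ℝ ℝ ℝ).comp DX)).prod
          ((ContinuousLinearMap.fst ℝ ℝ ℝ).comp DX)) p := HasFDerivAt.prodMk (HasFDerivAt.neg hv) hu
    have hYeq : Y = fun q => (P q * ((X q).1 ^ 2 + (X q).2 ^ 2))⁻¹ • (-(X q).2, (X q).1) :=
      funext hY
    have hYd : HasFDerivAt Y
        ((P p * ((X p).1 ^ 2 + (X p).2 ^ 2))⁻¹ •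
            ((-((ContinuousLinearMap.snd ℝ ℝ ℝ).comp DX)).prod
              ((ContinuousLinearMap.fst ℝ ℝ ℝ).comp DX)) +
          (-((P p * ((X p).1 ^ 2 + (X p).2 ^ 2)) ^ 2)⁻¹ •
            (P p • ((2 * (X p).1) • (ContinuousLinearMap.fst ℝ ℝ ℝ).comp DX +
                (2 * (X p).2) • (ContinuousLinearMap.snd ℝ ℝ ℝ).comp DX) +
              ((X p).1 ^ 2 + (X p).2 ^ 2) • DP)).smulRight (-(X p).2, (X p).1)) p := by
      rw [hYeq]; exact hcinv.smul hW
    have hZd := (hasFDerivAt_inv_comp' hN hN0).smul hXd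
    rw [hYd.fderiv, (show HasFDerivAt (fun q => ((X q).1 ^ 2 + (X q).2 ^ 2)⁻¹ • X q) _ p from hZd).fderiv]
    obtain ⟨a, b, hab⟩ : ∃ a b, X p = (a, b) := ⟨_, _, rfl⟩
    obtain ⟨ux, vx, hx10⟩ : ∃ c d, DX (1, 0) = (c, d) := ⟨_, _, rfl⟩
    obtain ⟨uy, vy, hx01⟩ : ∃ c d, DX (0, 1) = (c, d) := ⟨_, _, rfl⟩
    set px := DP (1, 0) with hpx
    set py := DP (0, 1) with hpy
    have hDXw : ∀ x y : ℝ, DX (x, y) = (x * ux + y * uy, x * vx + y * vy) := by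
      intro x y
      rw [clm_expand' DX x y, hx10, hx01]
      simp [Prod.ext_iff]
    have hDPw : ∀ x y : ℝ, DP (x, y) = x * px + y * py := by
      intro x y
      rw [clm_expand' DP x y]
      simp [smul_eq_mul, hpx, hpy]
    have hc1 : vx = uy := by
      have h := hcl p
      rw [hv.fderiv, hu.fderiv] at h
      simpa [hx10, hx01] using h
    have hc2 : P p * ux + a * px + (P p * vy + b * py) = 0 := by
      have h := hdiv p
      rw [(show HasFDerivAt (fun q => P q * (X q).1) _ p from hPd.mul hu).fderiv,
        (show HasFDerivAt (fun q => P q * (X q).2) _ p from hPd.mul hv).fderiv] at h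
      simp only [ContinuousLinearMap.add_apply, ContinuousLinearMap.coe_smul', Pi.smul_apply,
        ContinuousLinearMap.comp_apply, ContinuousLinearMap.coe_fst', ContinuousLinearMap.coe_snd',
        hx10, hx01, hab, smul_eq_mul] at h
      linarith [h]
    have hYp : Y p = ((P p * (a ^ 2 + b ^ 2))⁻¹ * (-b), (P p * (a ^ 2 + b ^ 2))⁻¹ * a) := by
      rw [hY p, hab]
      simp [Prod.ext_iff]
    have hw1 : ((X p).1 ^ 2 + (X p).2 ^ 2)⁻¹ • X p
        = ((a ^ 2 + b ^ 2)⁻¹ * a, (a ^ 2 + b ^ 2)⁻¹ * b) := by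
      rw [hab]
      simp [Prod.ext_iff]
    rw [hw1, hYp]
    simp only [hab] at hN0 ⊢
    simp only [ContinuousLinearMap.add_apply, ContinuousLinearMap.coe_smul', Pi.smul_apply,
      ContinuousLinearMap.smulRight_apply, ContinuousLinearMap.comp_apply,
      ContinuousLinearMap.prod_apply, ContinuousLinearMap.neg_apply, ContinuousLinearMap.coe_fst',
      ContinuousLinearMap.coe_snd', hDXw, hDPw, smul_eq_mul, Prod.smul_mk, Prod.mk_add_mk,
      Prod.neg_mk, Prod.mk_sub_mk]
    subst hc1
    have hvy : vy = (-(P p * ux) - a * px - b * py) / P p := by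
      field_simp
      linarith [hc2]
    subst hvy
    rw [Prod.mk_eq_zero]
    constructor
    · field_simp
      ring
    · field_simp
      ring
end
end

section
/- Let f : ℝ² → ℝ be smooth, ℤ²-periodic, and nonzero on a dense subset of ℝ², let (a, b) ∈ ℝ² with (a,b) ≠ (0,0), and set X(p) = f(p)·(a, b). Then: (i) there exists a closed, nowhere vanishing 1-form on the flat torus annihilating X (namely (b·1, −a·1), so X is winding); and (ii) every closed 1-form (ω₁, ω₂) on the flat torus with ω₁X₁ + ω₂X₂ = 0 and nonzero period vector has period vector equal to a nonzero scalar multiple of (b, −a). Hence the winding number of X with respect to the standard homology generators is the projective class [(a, b)]. -/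
open MeasureTheory

noncomputable section

/-! ### Auxiliary lemmas for stmt_14 -/

/-- Differentiation under the interval integral, parameter in the first slot. -/
lemma hasDerivAt_param_fst (u : ℝ × ℝ → ℝ) (hu : ContDiff ℝ (⊤ : ℕ∞) u) (x₀ : ℝ) :
    HasDerivAt (fun x => ∫ t in (0:ℝ)..1, u (x, t))
      (∫ t in (0:ℝ)..1, fderiv ℝ u (x₀, t) (1, 0)) x₀ := by
  have hucont : Continuous u := hu.continuous
  have hdiff : Differentiable ℝ u := hu.differentiable (by simp)
  have hfd : Continuous fun p : ℝ × ℝ => fderiv ℝ u p (1, 0) :=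
    (hu.continuous_fderiv (by simp)).clm_apply continuous_const
  obtain ⟨C, hC⟩ : ∃ C, ∀ p ∈ (Set.Icc (x₀ - 1) (x₀ + 1)) ×ˢ (Set.Icc (0:ℝ) 1),
      ‖fderiv ℝ u p (1, 0)‖ ≤ C :=
    (isCompact_Icc.prod isCompact_Icc).exists_bound_of_continuousOn hfd.continuousOn
  have key := intervalIntegral.hasDerivAt_integral_of_dominated_loc_of_deriv_le
    (F := fun x t => u (x, t)) (F' := fun x t => fderiv ℝ u (x, t) (1, 0))
    (x₀ := x₀) (a := (0:ℝ)) (b := 1) (bound := fun _ => C) (μ := volume)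
    (s := Metric.ball x₀ 1) (Metric.ball_mem_nhds x₀ one_pos)
    (Filter.Eventually.of_forall fun x =>
      ((hucont.comp (continuous_const.prodMk continuous_id)).aestronglyMeasurable))
    ((hucont.comp (continuous_const.prodMk continuous_id)).intervalIntegrable 0 1)
    ((hfd.comp (continuous_const.prodMk continuous_id)).aestronglyMeasurable)
    (MeasureTheory.ae_of_all _ ?hbound)
    (intervalIntegrable_const)
    (MeasureTheory.ae_of_all _ ?hdiff)
  · exact key.2
  case hbound =>
    intro t ht x hx
    apply hC
    constructor
    · have : |x - x₀| < 1 := by simpa [Real.dist_eq] using hx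
      have h1 := abs_le.mp this.le
      exact ⟨by linarith [h1.1], by linarith [h1.2]⟩
    · rw [Set.uIoc_of_le (by norm_num : (0:ℝ) ≤ 1)] at ht
      exact Set.Ioc_subset_Icc_self ht
  case hdiff =>
    intro t _ x _
    have h1 : HasFDerivAt u (fderiv ℝ u (x, t)) (x, t) := (hdiff (x, t)).hasFDerivAt
    have h2 : HasDerivAt (fun x : ℝ => ((x, t) : ℝ × ℝ)) ((1 : ℝ), (0 : ℝ)) x :=
      (hasDerivAt_id x).prodMk (hasDerivAt_const x t)
    exact h1.comp_hasDerivAt x h2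

/-- Differentiation under the interval integral, parameter in the second slot. -/
lemma hasDerivAt_param_snd (u : ℝ × ℝ → ℝ) (hu : ContDiff ℝ (⊤ : ℕ∞) u) (y₀ : ℝ) :
    HasDerivAt (fun y => ∫ t in (0:ℝ)..1, u (t, y))
      (∫ t in (0:ℝ)..1, fderiv ℝ u (t, y₀) (0, 1)) y₀ := by
  have hucont : Continuous u := hu.continuous
  have hdiff : Differentiable ℝ u := hu.differentiable (by simp)
  have hfd : Continuous fun p : ℝ × ℝ => fderiv ℝ u p (0, 1) :=
    (hu.continuous_fderiv (by simp)).clm_apply continuous_const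
  obtain ⟨C, hC⟩ : ∃ C, ∀ p ∈ (Set.Icc (0:ℝ) 1) ×ˢ (Set.Icc (y₀ - 1) (y₀ + 1)),
      ‖fderiv ℝ u p (0, 1)‖ ≤ C :=
    (isCompact_Icc.prod isCompact_Icc).exists_bound_of_continuousOn hfd.continuousOn
  have key := intervalIntegral.hasDerivAt_integral_of_dominated_loc_of_deriv_le
    (F := fun y t => u (t, y)) (F' := fun y t => fderiv ℝ u (t, y) (0, 1))
    (x₀ := y₀) (a := (0:ℝ)) (b := 1) (bound := fun _ => C) (μ := volume)
    (s := Metric.ball y₀ 1) (Metric.ball_mem_nhds y₀ one_pos)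
    (Filter.Eventually.of_forall fun y =>
      ((hucont.comp (continuous_id.prodMk continuous_const)).aestronglyMeasurable))
    ((hucont.comp (continuous_id.prodMk continuous_const)).intervalIntegrable 0 1)
    ((hfd.comp (continuous_id.prodMk continuous_const)).aestronglyMeasurable)
    (MeasureTheory.ae_of_all _ ?hbound)
    (intervalIntegrable_const)
    (MeasureTheory.ae_of_all _ ?hdiff)
  · exact key.2
  case hbound =>
    intro t ht y hy
    apply hC
    constructor
    · rw [Set.uIoc_of_le (by norm_num : (0:ℝ) ≤ 1)] at ht
      exact Set.Ioc_subset_Icc_self ht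
    · have : |y - y₀| < 1 := by simpa [Real.dist_eq] using hy
      have h1 := abs_le.mp this.le
      exact ⟨by linarith [h1.1], by linarith [h1.2]⟩
  case hdiff =>
    intro t _ y _
    have h1 : HasFDerivAt u (fderiv ℝ u (t, y)) (t, y) := (hdiff (t, y)).hasFDerivAt
    have h2 : HasDerivAt (fun y : ℝ => ((t, y) : ℝ × ℝ)) ((0 : ℝ), (1 : ℝ)) y :=
      (hasDerivAt_const y t).prodMk (hasDerivAt_id y)
    exact h1.comp_hasDerivAt y h2

/-- Fubini on the unit square for a continuous function. -/
lemma fubini_unit_square (u : ℝ × ℝ → ℝ) (hu : Continuous u) :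
    ∫ x in (0:ℝ)..1, (∫ t in (0:ℝ)..1, u (x, t)) =
    ∫ t in (0:ℝ)..1, (∫ x in (0:ℝ)..1, u (x, t)) := by
  have h01 : (0:ℝ) ≤ 1 := by norm_num
  simp only [intervalIntegral.integral_of_le h01]
  have hint : MeasureTheory.Integrable (Function.uncurry fun x t => u (x, t))
      ((volume.restrict (Set.Ioc (0:ℝ) 1)).prod (volume.restrict (Set.Ioc (0:ℝ) 1))) := by
    rw [MeasureTheory.Measure.prod_restrict]
    have : MeasureTheory.IntegrableOn u ((Set.Icc (0:ℝ) 1) ×ˢ (Set.Icc (0:ℝ) 1))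
        (volume.prod volume) :=
      hu.continuousOn.integrableOn_compact (isCompact_Icc.prod isCompact_Icc)
    exact this.mono_set (Set.prod_mono Set.Ioc_subset_Icc_self Set.Ioc_subset_Icc_self)
  exact MeasureTheory.integral_integral_swap hint

/-- A vector field `X = f·(a,b)` with `f` densely nonzero is winding,
and every closed 1-form annihilating `X` with nonzero period vector has period vector
a nonzero multiple of `(b, -a)`; hence the winding number of `X` is `[(a,b)]`. -/
theorem stmt_14 (f : ℝ × ℝ → ℝ) (hf : ContDiff ℝ (⊤ : ℕ∞) f) (hfper : ZPeriodic f)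
    (hdense : Dense {p : ℝ × ℝ | f p ≠ 0})
    (a b : ℝ) (hab : (a, b) ≠ ((0 : ℝ), (0 : ℝ)))
    (X : ℝ × ℝ → ℝ × ℝ) (hX : ∀ p : ℝ × ℝ, X p = f p • ((a, b) : ℝ × ℝ)) :
    (∃ ω₁ ω₂ : ℝ × ℝ → ℝ, ClosedOneForm ω₁ ω₂ ∧
      (∀ p : ℝ × ℝ, (ω₁ p, ω₂ p) ≠ (0, 0)) ∧
      (∀ p : ℝ × ℝ, ω₁ p * (X p).1 + ω₂ p * (X p).2 = 0)) ∧
    (∀ ω₁ ω₂ : ℝ × ℝ → ℝ, ClosedOneForm ω₁ ω₂ →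
      (∀ p : ℝ × ℝ, ω₁ p * (X p).1 + ω₂ p * (X p).2 = 0) →
      PeriodVector ω₁ ω₂ ≠ (0, 0) →
      ∃ c : ℝ, c ≠ 0 ∧ PeriodVector ω₁ ω₂ = c • ((b, -a) : ℝ × ℝ)) := by
  constructor
  · -- Part (i): the constant form (b, -a)
    refine ⟨fun _ => b, fun _ => -a, ⟨⟨contDiff_const, contDiff_const,
      fun _ _ => rfl, fun _ _ => rfl⟩, ?_⟩, ?_, ?_⟩
    · intro p; simp
    · intro p hp
      have h1 : b = 0 := congrArg Prod.fst hp
      have h2 : -a = 0 := congrArg Prod.snd hp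
      exact hab (by simp only [Prod.mk.injEq]; exact ⟨by linarith, h1⟩)
    · intro p
      rw [hX p]
      simp only [Prod.smul_fst, Prod.smul_snd, smul_eq_mul]
      ring
  · -- Part (ii)
    intro ω₁ ω₂ hω hann hP
    obtain ⟨⟨hc1, hc2, hp1, hp2⟩, hclosed⟩ := hω
    -- Step A: a ω₁ + b ω₂ = 0 everywhere
    have hzero : ∀ p : ℝ × ℝ, a * ω₁ p + b * ω₂ p = 0 := by
      have heq : (fun p : ℝ × ℝ => a * ω₁ p + b * ω₂ p) = fun _ => (0:ℝ) := by
        apply Continuous.ext_on hdense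
          (((continuous_const.mul hc1.continuous).add
            (continuous_const.mul hc2.continuous))) continuous_const
        intro p hp
        have h := hann p
        rw [hX p] at h
        simp only [Prod.smul_fst, Prod.smul_snd, smul_eq_mul] at h
        have hfp : f p ≠ 0 := hp
        have : f p * (a * ω₁ p + b * ω₂ p) = 0 := by rw [← h]; ring
        rcases mul_eq_zero.mp this with h' | h'
        · exact absurd h' hfp
        · exact h'
      intro p; exact congrFun heq p
    set P₁ : ℝ := ∫ t in (0:ℝ)..1, ω₁ (t, 0) with hP₁
    set P₂ : ℝ := ∫ t in (0:ℝ)..1, ω₂ (0, t) with hP₂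
    -- G(y) = ∫₀¹ ω₁(t,y) dt is constant
    have hG : ∀ y : ℝ, (∫ t in (0:ℝ)..1, ω₁ (t, y)) = P₁ := by
      have hd : ∀ y : ℝ, HasDerivAt (fun y => ∫ t in (0:ℝ)..1, ω₁ (t, y)) 0 y := by
        intro y
        have h := hasDerivAt_param_snd ω₁ hc1 y
        have hval : (∫ t in (0:ℝ)..1, fderiv ℝ ω₁ (t, y) (0, 1)) = 0 := by
          have hrw : (∫ t in (0:ℝ)..1, fderiv ℝ ω₁ (t, y) (0, 1))
              = ∫ t in (0:ℝ)..1, fderiv ℝ ω₂ (t, y) (1, 0) := by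
            apply intervalIntegral.integral_congr
            intro t _; exact (hclosed (t, y)).symm
          have hftc : (∫ t in (0:ℝ)..1, fderiv ℝ ω₂ (t, y) (1, 0))
              = ω₂ (1, y) - ω₂ (0, y) := by
            apply intervalIntegral.integral_eq_sub_of_hasDerivAt (f := fun s => ω₂ (s, y))
            · intro t _
              have h1 : HasFDerivAt ω₂ (fderiv ℝ ω₂ (t, y)) (t, y) :=
                ((hc2.differentiable (by simp)) (t, y)).hasFDerivAt
              have h2 : HasDerivAt (fun s : ℝ => ((s, y) : ℝ × ℝ)) ((1:ℝ), (0:ℝ)) t :=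
                (hasDerivAt_id t).prodMk (hasDerivAt_const t y)
              exact h1.comp_hasDerivAt t h2
            · exact (((hc2.continuous_fderiv (by simp)).clm_apply continuous_const).comp
                (continuous_id.prodMk continuous_const)).intervalIntegrable 0 1
          have hper : ω₂ (1, y) = ω₂ (0, y) := by
            have := hp2 (0, y) (1, 0)
            push_cast at this
            simpa using this
          rw [hrw, hftc, hper, sub_self]
        rwa [hval] at h
      intro y
      have hdiffble : Differentiable ℝ (fun y => ∫ t in (0:ℝ)..1, ω₁ (t, y)) :=
        fun y => (hd y).differentiableAt
      have hderiv0 : ∀ y : ℝ, deriv (fun y => ∫ t in (0:ℝ)..1, ω₁ (t, y)) y = 0 :=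
        fun y => (hd y).deriv
      exact is_const_of_deriv_eq_zero hdiffble hderiv0 y 0
    -- K(x) = ∫₀¹ ω₂(x,t) dt is constant
    have hK : ∀ x : ℝ, (∫ t in (0:ℝ)..1, ω₂ (x, t)) = P₂ := by
      have hd : ∀ x : ℝ, HasDerivAt (fun x => ∫ t in (0:ℝ)..1, ω₂ (x, t)) 0 x := by
        intro x
        have h := hasDerivAt_param_fst ω₂ hc2 x
        have hval : (∫ t in (0:ℝ)..1, fderiv ℝ ω₂ (x, t) (1, 0)) = 0 := by
          have hrw : (∫ t in (0:ℝ)..1, fderiv ℝ ω₂ (x, t) (1, 0))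
              = ∫ t in (0:ℝ)..1, fderiv ℝ ω₁ (x, t) (0, 1) := by
            apply intervalIntegral.integral_congr
            intro t _; exact hclosed (x, t)
          have hftc : (∫ t in (0:ℝ)..1, fderiv ℝ ω₁ (x, t) (0, 1))
              = ω₁ (x, 1) - ω₁ (x, 0) := by
            apply intervalIntegral.integral_eq_sub_of_hasDerivAt (f := fun s => ω₁ (x, s))
            · intro t _
              have h1 : HasFDerivAt ω₁ (fderiv ℝ ω₁ (x, t)) (x, t) :=
                ((hc1.differentiable (by simp)) (x, t)).hasFDerivAt
              have h2 : HasDerivAt (fun s : ℝ => ((x, s) : ℝ × ℝ)) ((0:ℝ), (1:ℝ)) t :=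
                (hasDerivAt_const t x).prodMk (hasDerivAt_id t)
              exact h1.comp_hasDerivAt t h2
            · exact (((hc1.continuous_fderiv (by simp)).clm_apply continuous_const).comp
                (continuous_const.prodMk continuous_id)).intervalIntegrable 0 1
          have hper : ω₁ (x, 1) = ω₁ (x, 0) := by
            have := hp1 (x, 0) (0, 1)
            push_cast at this
            simpa using this
          rw [hrw, hftc, hper, sub_self]
        rwa [hval] at h
      intro x
      have hdiffble : Differentiable ℝ (fun x => ∫ t in (0:ℝ)..1, ω₂ (x, t)) :=
        fun x => (hd x).differentiableAt
      have hderiv0 : ∀ x : ℝ, deriv (fun x => ∫ t in (0:ℝ)..1, ω₂ (x, t)) x = 0 :=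
        fun x => (hd x).deriv
      exact is_const_of_deriv_eq_zero hdiffble hderiv0 x 0
    -- Step B: a P₁ + b P₂ = 0
    have hortho : a * P₁ + b * P₂ = 0 := by
      have h1 : (∫ x in (0:ℝ)..1, (∫ t in (0:ℝ)..1, ω₂ (x, t))) = P₂ := by
        rw [intervalIntegral.integral_congr (g := fun _ => P₂) (fun x _ => hK x)]
        simp
      have h2 : ∀ t : ℝ, b * (∫ x in (0:ℝ)..1, ω₂ (x, t)) = -(a * P₁) := by
        intro t
        rw [← intervalIntegral.integral_const_mul]
        have : (∫ x in (0:ℝ)..1, b * ω₂ (x, t)) = ∫ x in (0:ℝ)..1, -(a * ω₁ (x, t)) := by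
          apply intervalIntegral.integral_congr
          intro x _
          show b * ω₂ (x, t) = -(a * ω₁ (x, t))
          have := hzero (x, t); linarith
        rw [this, intervalIntegral.integral_neg, intervalIntegral.integral_const_mul, hG t]
      have h3 : b * P₂ = -(a * P₁) := by
        rw [← h1, fubini_unit_square ω₂ hc2.continuous, ← intervalIntegral.integral_const_mul]
        rw [intervalIntegral.integral_congr (g := fun _ => -(a * P₁))
          (fun t _ => h2 t)]
        simp
      linarith
    -- Step C: algebra
    have hPV : PeriodVector ω₁ ω₂ = (P₁, P₂) := rfl
    rw [hPV] at hP ⊢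
    have hPne : P₁ ≠ 0 ∨ P₂ ≠ 0 := by
      by_contra h
      push_neg at h
      exact hP (Prod.ext h.1 h.2)
    by_cases ha : a = 0
    · have hb : b ≠ 0 := by
        intro hb; exact hab (Prod.ext ha hb)
      have hP₂0 : P₂ = 0 := by
        have : b * P₂ = 0 := by rw [ha] at hortho; linarith
        exact (mul_eq_zero.mp this).resolve_left hb
      have hP₁ne : P₁ ≠ 0 := by
        rcases hPne with h | h
        · exact h
        · exact absurd hP₂0 h
      refine ⟨P₁ / b, div_ne_zero hP₁ne hb, ?_⟩
      rw [Prod.smul_mk, smul_eq_mul, smul_eq_mul]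
      rw [ha, hP₂0]
      field_simp
      simp
    · have hP₂ne : P₂ ≠ 0 := by
        intro hP₂0
        have hP₁0 : P₁ = 0 := by
          have : a * P₁ = 0 := by rw [hP₂0] at hortho; linarith
          exact (mul_eq_zero.mp this).resolve_left ha
        exact hP (Prod.ext hP₁0 hP₂0)
      refine ⟨-P₂ / a, div_ne_zero (neg_ne_zero.mpr hP₂ne) ha, ?_⟩
      rw [Prod.smul_mk, smul_eq_mul, smul_eq_mul]
      have hP₁eq : P₁ = -P₂ / a * b := by
        field_simp
        linarith
      rw [hP₁eq]
      congr 1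
      field_simp
end
end
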